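/- If a self-similar resistance form on a self-similar finitely ramified fractal F is regular (all energy renormalization factors ρ_i > 1), then the R-completion Ω of V_* equals F. -/

import Mathlib

/-- A resistance form `(𝓔, Dom 𝓔)` on a set `V` in the sense of Kigami:
(RF1) `dom` is a linear subspace of `ℓ(V)` containing constants, `Energy` is a nonnegative
symmetric quadratic form vanishing exactly on constants; (RF2) the quotient modulo constants
is a Hilbert space (completeness); (RF3) finite extension property; (RF4) the effective
resistance suprema are finite; (RF5) the Markov property. -/
structure ResistanceForm (V : Type) : Type where
  dom : Set (V → ℝ)
  Energy : (V → ℝ) → (V → ℝ) → ℝ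
  dom_add_smul : ∀ u ∈ dom, ∀ v ∈ dom, ∀ a b : ℝ, (a • u + b • v) ∈ dom
  const_mem : ∀ c : ℝ, (fun _ => c) ∈ dom
  symm : ∀ u v, Energy u v = Energy v u
  add_smul_left : ∀ u v w : V → ℝ, ∀ a b : ℝ,
    Energy (a • u + b • v) w = a * Energy u w + b * Energy v w
  nonneg : ∀ u ∈ dom, 0 ≤ Energy u u
  energy_zero_iff : ∀ u ∈ dom, (Energy u u = 0 ↔ ∃ c : ℝ, u = fun _ => c)
  complete : ∀ u : ℕ → (V → ℝ), (∀ n, u n ∈ dom) →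
    (∀ ε : ℝ, 0 < ε → ∃ N, ∀ m ≥ N, ∀ n ≥ N, Energy (u m - u n) (u m - u n) < ε) →
    ∃ v ∈ dom, Filter.Tendsto (fun n => Energy (u n - v) (u n - v)) Filter.atTop (nhds 0)
  exists_extension : ∀ (s : Finset V) (g : V → ℝ), ∃ u ∈ dom, ∀ p ∈ s, u p = g p
  bddAbove : ∀ p q : V,
    BddAbove {r : ℝ | ∃ u ∈ dom, 0 < Energy u u ∧ r = (u p - u q) ^ 2 / Energy u u}
  markov : ∀ u ∈ dom, (fun p => min 1 (max 0 (u p))) ∈ dom ∧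
    Energy (fun p => min 1 (max 0 (u p))) (fun p => min 1 (max 0 (u p))) ≤ Energy u u

namespace ResistanceForm

variable {V : Type}

/-- The effective resistance
`R(p,q) = sup { (u(p) - u(q))² / 𝓔(u,u) : u ∈ Dom 𝓔, 𝓔(u,u) > 0 }`. -/
noncomputable def R (rf : ResistanceForm V) (p q : V) : ℝ :=
  sSup {r : ℝ | ∃ u ∈ rf.dom, 0 < rf.Energy u u ∧ r = (u p - u q) ^ 2 / rf.Energy u u}

end ResistanceForm
open Filter Topology

/-- Iterated composition `ψ_w = ψ_{w_1} ∘ ... ∘ ψ_{w_n}` for a finite word `w`. -/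
def iterMaps {F : Type} {m : ℕ} (ψ : Fin m → F → F) : {n : ℕ} → (Fin n → Fin m) → F → F
  | 0, _, x => x
  | _ + 1, w, x => ψ (w 0) (iterMaps ψ (fun i => w i.succ) x)

/-- A finitely ramified self-similar set: a compact connected metric space `F` with
injective contractions `ψ_1, ..., ψ_m` such that `F = ⋃ ψ_i(F)`, a finite vertex boundary
`V₀` with at least two elements, and for any two distinct words `w, w'` of the same length,
`F_w ∩ F_{w'} = V_w ∩ V_{w'}` where `F_w = ψ_w(F)` and `V_w = ψ_w(V₀)`. -/
structure SSFR (F : Type) [MetricSpace F] [CompactSpace F] [ConnectedSpace F] : Type where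
  m : ℕ
  hm : 0 < m
  ψ : Fin m → F → F
  inj : ∀ i, Function.Injective (ψ i)
  contraction : ∀ i, ∃ r : NNReal, r < 1 ∧ LipschitzWith r (ψ i)
  V0 : Finset F
  two_le_card_V0 : 2 ≤ V0.card
  cover : (⋃ i, Set.range (ψ i)) = Set.univ
  sep : ∀ n : ℕ, ∀ w w' : Fin n → Fin m, w ≠ w' →
    Set.range (iterMaps ψ w) ∩ Set.range (iterMaps ψ w') =
      (iterMaps ψ w '' (V0 : Set F)) ∩ (iterMaps ψ w' '' (V0 : Set F))

namespace SSFR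

variable {F : Type} [MetricSpace F] [CompactSpace F] [ConnectedSpace F]

/-- The set `V_*` of all vertex points `V_w = ψ_w(V₀)`. -/
def Vstar (S : SSFR F) : Set F :=
  ⋃ n : ℕ, ⋃ w : Fin n → Fin S.m, iterMaps S.ψ w '' (S.V0 : Set F)

/-- The vertices of level `n`: `V_n = ⋃_{w ∈ W_n} ψ_w(V₀)`. -/
def Vlevel (S : SSFR F) (n : ℕ) : Set F :=
  ⋃ w : Fin n → Fin S.m, iterMaps S.ψ w '' (S.V0 : Set F)

/-- `f ∘ ψ_i` as a function on `V_*`. -/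
def compose (S : SSFR F) (hmap : ∀ i, Set.MapsTo (S.ψ i) S.Vstar S.Vstar)
    (i : Fin S.m) (f : ↥S.Vstar → ℝ) : ↥S.Vstar → ℝ :=
  fun v => f ⟨S.ψ i v, hmap i v.2⟩

/-- A resistance form on `V_*` is self-similar with energy renormalization factors `ρ` if
`𝓔(f,f) = Σ_i ρ_i 𝓔(f ∘ ψ_i, f ∘ ψ_i)`. -/
def IsSelfSimilarForm (S : SSFR F) (hmap : ∀ i, Set.MapsTo (S.ψ i) S.Vstar S.Vstar)
    (rf : ResistanceForm ↥S.Vstar) (ρ : Fin S.m → ℝ) : Prop :=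
  ∀ f ∈ rf.dom, (∀ i, S.compose hmap i f ∈ rf.dom) ∧
    rf.Energy f f = ∑ i, ρ i * rf.Energy (S.compose hmap i f) (S.compose hmap i f)

/-- An `n`-harmonic function: an energy minimizer for the given values on `V_n`
(for `n = 0`, a harmonic function). -/
def IsNHarm (S : SSFR F) (rf : ResistanceForm ↥S.Vstar) (n : ℕ)
    (f : ↥S.Vstar → ℝ) : Prop :=
  f ∈ rf.dom ∧ ∀ g ∈ rf.dom, (∀ v : ↥S.Vstar, (v : F) ∈ S.Vlevel n → g v = f v) →
    rf.Energy f f ≤ rf.Energy g g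

end SSFR

/-!
Follow an address `w` of `x`, i.e. `x ∈ ψ_{w_0} ⋯ ψ_{w_{n-1}}(F)` for all `n`, and put
`v_n = ψ_{w_0} ⋯ ψ_{w_{n-1}}(p)` for a fixed `p ∈ V₀`. The maps `ψ_i` are uniform contractions of
`F`, so `v_n → x`. Self-similarity gives `ρ_i 𝓔(f ∘ ψ_i) ≤ 𝓔(f)`, hence
`R(ψ_i p, ψ_i q) ≤ ρ_i⁻¹ R(p, q)`; with all `ρ_i > 1` this makes `R(v_n, v_{n+1})` decay
geometrically, and since `√R` satisfies the triangle inequality, `(v_n)` is `R`-Cauchy.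
-/

lemma exists_nonneg_lt_one_forall_le {ι : Type*} [Finite ι] {f : ι → ℝ}
    (hf : ∀ i, f i < 1) :
    ∃ c, 0 ≤ c ∧ c < 1 ∧ ∀ i, f i ≤ c := by
  cases isEmpty_or_nonempty ι
  · exact ⟨0, le_rfl, one_pos, isEmptyElim⟩
  · obtain ⟨j, hj⟩ := Finite.exists_max f
    exact ⟨max 0 (f j), le_max_left _ _, max_lt one_pos (hf j),
      fun i => (hj i).trans (le_max_right _ _)⟩

lemma cauchy_of_le_geometric_of_triangle {α : Type*} (d : α → α → ℝ)
    (d_self : ∀ p, d p p = 0) (d_comm : ∀ p q, d p q = d q p)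
    (d_triangle : ∀ p q r, d p r ≤ d p q + d q r) {v : ℕ → α} {C r : ℝ} (hr : r < 1)
    (hv : ∀ n, d (v n) (v (n + 1)) ≤ C * r ^ n) :
    ∀ ε > 0, ∃ N, ∀ j ≥ N, ∀ l ≥ N, d (v j) (v l) < ε := by
  let _ : PseudoMetricSpace α :=
    { dist := d, dist_self := d_self, dist_comm := d_comm, dist_triangle := d_triangle }
  exact Metric.cauchySeq_iff.1 (cauchySeq_of_le_geometric (f := v) r C hr hv)

def prefixMap {α ι : Type*} (g : ι → α → α) (w : ℕ → ι) : ℕ → α → α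
  | 0 => id
  | n + 1 => prefixMap g w n ∘ g (w n)

lemma prefixMap_le_pow_mul {α ι : Type*} {d : α → α → ℝ} {g : ι → α → α} {c : ℝ}
    (hc : 0 ≤ c) (hg : ∀ i p q, d (g i p) (g i q) ≤ c * d p q) (w : ℕ → ι) (n : ℕ)
    (p q : α) :
    d (prefixMap g w n p) (prefixMap g w n q) ≤ c ^ n * d p q := by
  induction n generalizing p q with
  | zero => simp [prefixMap]
  | succ n ih =>
    calc d (prefixMap g w n (g (w n) p)) (prefixMap g w n (g (w n) q))
        ≤ c ^ n * d (g (w n) p) (g (w n) q) := ih _ _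
      _ ≤ c ^ n * (c * d p q) := mul_le_mul_of_nonneg_left (hg _ _ _) (pow_nonneg hc n)
      _ = c ^ (n + 1) * d p q := by ring

lemma coe_prefixMap_restrict {α ι : Type*} {s : Set α} {g : ι → α → α}
    (hg : ∀ i, Set.MapsTo (g i) s s) (w : ℕ → ι) (n : ℕ) (p : s) :
    (prefixMap (α := s) (fun i => (hg i).restrict (g i) s s) w n p : α) = prefixMap g w n p := by
  induction n generalizing p with
  | zero => rfl
  | succ n ih => exact ih _

namespace ResistanceForm

variable {V : Type} (rf : ResistanceForm V)

lemma R_nonneg (p q : V) : 0 ≤ rf.R p q :=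
  Real.sSup_nonneg fun _ ⟨_, _, hE, hr⟩ => hr ▸ div_nonneg (sq_nonneg _) hE.le

lemma R_self (p : V) : rf.R p p = 0 :=
  le_antisymm (Real.sSup_le (fun _ ⟨_, _, _, hr⟩ => by simp [hr]) le_rfl) (rf.R_nonneg p p)

lemma R_comm (p q : V) : rf.R p q = rf.R q p := by
  have (u : V → ℝ) : (u p - u q) ^ 2 = (u q - u p) ^ 2 := by ring
  simp only [R, this]

lemma sq_sub_le_R_mul_energy {u : V → ℝ} (hu : u ∈ rf.dom) (p q : V) :
    (u p - u q) ^ 2 ≤ rf.R p q * rf.Energy u u := by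
  rcases (rf.nonneg u hu).lt_or_eq with hE | hE
  · rw [← div_le_iff₀ hE]
    exact le_csSup (rf.bddAbove p q) ⟨u, hu, hE, rfl⟩
  · obtain ⟨c, rfl⟩ := (rf.energy_zero_iff u hu).1 hE.symm
    simp [← hE]

lemma R_le_of_forall_sq_sub_le {p q : V} {B : ℝ} (hB : 0 ≤ B)
    (h : ∀ u ∈ rf.dom, (u p - u q) ^ 2 ≤ B * rf.Energy u u) : rf.R p q ≤ B :=
  Real.sSup_le (fun _ ⟨u, hu, hE, hr⟩ => hr ▸ (div_le_iff₀ hE).2 (h u hu)) hB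

lemma sqrt_R_triangle (p q r : V) :
    √(rf.R p r) ≤ √(rf.R p q) + √(rf.R q r) := by
  have abs_le (u : V → ℝ) (hu : u ∈ rf.dom) (p q : V) :
      |u p - u q| ≤ √(rf.R p q) * √(rf.Energy u u) := by
    rw [← Real.sqrt_sq_eq_abs, ← Real.sqrt_mul (rf.R_nonneg p q)]
    exact Real.sqrt_le_sqrt (rf.sq_sub_le_R_mul_energy hu p q)
  refine (Real.sqrt_le_left (by positivity)).2 (rf.R_le_of_forall_sq_sub_le (sq_nonneg _) ?_)
  intro u hu
  have hE := rf.nonneg u hu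
  calc (u p - u r) ^ 2 = |(u p - u q) + (u q - u r)| ^ 2 := by rw [sq_abs]; ring_nf
    _ ≤ ((√(rf.R p q) + √(rf.R q r)) * √(rf.Energy u u)) ^ 2 := by
      gcongr
      rw [add_mul]
      exact (abs_add_le _ _).trans (add_le_add (abs_le u hu p q) (abs_le u hu q r))
    _ = (√(rf.R p q) + √(rf.R q r)) ^ 2 * rf.Energy u u := by rw [mul_pow, Real.sq_sqrt hE]

lemma R_cauchy_of_le_geometric {v : ℕ → V} {C c : ℝ} (hc0 : 0 ≤ c) (hc : c < 1)
    (hv : ∀ n, rf.R (v n) (v (n + 1)) ≤ C * c ^ n) :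
    ∀ ε > 0, ∃ N, ∀ j ≥ N, ∀ l ≥ N, rf.R (v j) (v l) < ε := by
  have hsqrt (n : ℕ) : √(rf.R (v n) (v (n + 1))) ≤ √C * √c ^ n := by
    have hpow : c ^ n = (√c ^ n) ^ 2 := by rw [← pow_mul, mul_comm, pow_mul, Real.sq_sqrt hc0]
    calc √(rf.R (v n) (v (n + 1))) ≤ √(C * c ^ n) := Real.sqrt_le_sqrt (hv n)
      _ = √C * √c ^ n := by
        rw [Real.sqrt_mul' C (pow_nonneg hc0 n), hpow, Real.sqrt_sq (by positivity)]
  intro ε hε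
  obtain ⟨N, hN⟩ := cauchy_of_le_geometric_of_triangle (fun p q => √(rf.R p q))
    (fun p => by simp [rf.R_self]) (fun p q => by rw [rf.R_comm]) rf.sqrt_R_triangle
    ((Real.sqrt_lt' one_pos).2 (by simpa using hc)) hsqrt (√ε) (Real.sqrt_pos.2 hε)
  exact ⟨N, fun j hj l hl => (Real.sqrt_lt_sqrt_iff (rf.R_nonneg _ _)).1 (hN j hj l hl)⟩

end ResistanceForm

namespace SSFR

variable {F : Type} [MetricSpace F] [CompactSpace F] [ConnectedSpace F] (S : SSFR F)

lemma exists_uniform_contraction :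
    ∃ r, 0 ≤ r ∧ r < 1 ∧ ∀ i p q, dist (S.ψ i p) (S.ψ i q) ≤ r * dist p q := by
  choose r hr1 hlip using S.contraction
  obtain ⟨c, hc0, hc1, hrc⟩ := exists_nonneg_lt_one_forall_le (f := fun i => (r i : ℝ))
    fun i => NNReal.coe_lt_one.2 (hr1 i)
  exact ⟨c, hc0, hc1, fun i p q =>
    ((hlip i).dist_le_mul p q).trans (mul_le_mul_of_nonneg_right (hrc i) dist_nonneg)⟩

lemma exists_address (x : F) :
    ∃ (w : ℕ → Fin S.m) (y : ℕ → F), ∀ n, prefixMap S.ψ w n (y n) = x := by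
  have hcov (z : F) : ∃ i, z ∈ Set.range (S.ψ i) :=
    Set.mem_iUnion.1 (S.cover ▸ Set.mem_univ z)
  choose idx pre hpre using hcov
  let y (n : ℕ) := pre^[n] x
  have hy (n : ℕ) : S.ψ (idx (y n)) (y (n + 1)) = y n := by
    simp only [y, Function.iterate_succ_apply', hpre]
  refine ⟨fun n => idx (y n), y, fun n => ?_⟩
  induction n with
  | zero => rfl
  | succ n ih => exact (congrArg _ (hy n)).trans ih

lemma tendsto_prefixMap {x : F} {w : ℕ → Fin S.m} {y : ℕ → F}
    (hy : ∀ n, prefixMap S.ψ w n (y n) = x) (p : F) :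
    Tendsto (fun n => prefixMap S.ψ w n p) atTop (𝓝 x) := by
  obtain ⟨r, hr0, hr1, hψ⟩ := S.exists_uniform_contraction
  have hdist (n : ℕ) :
      dist (prefixMap S.ψ w n p) x ≤ r ^ n * Metric.diam (Set.univ : Set F) := by
    rw [← hy n]
    refine (prefixMap_le_pow_mul hr0 hψ w n p (y n)).trans ?_
    exact mul_le_mul_of_nonneg_left
      (Metric.dist_le_diam_of_mem isCompact_univ.isBounded trivial trivial) (pow_nonneg hr0 n)
  refine tendsto_iff_dist_tendsto_zero.2 (squeeze_zero (fun _ => dist_nonneg) hdist ?_)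
  simpa using (tendsto_pow_atTop_nhds_zero_of_lt_one hr0 hr1).mul_const _

lemma V0_subset_Vstar : (S.V0 : Set F) ⊆ S.Vstar :=
  fun p hp => Set.mem_iUnion.2 ⟨0, Set.mem_iUnion.2 ⟨Fin.elim0, p, hp, rfl⟩⟩

lemma V0_nonempty : S.V0.Nonempty :=
  Finset.card_pos.1 (two_pos.trans_le S.two_le_card_V0)

variable {S} {hmap : ∀ i, Set.MapsTo (S.ψ i) S.Vstar S.Vstar}
  {rf : ResistanceForm ↥S.Vstar} {ρ : Fin S.m → ℝ}

lemma IsSelfSimilarForm.mul_energy_compose_le (hss : S.IsSelfSimilarForm hmap rf ρ)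
    (hρ : ∀ i, 0 ≤ ρ i) {f : ↥S.Vstar → ℝ} (hf : f ∈ rf.dom) (i : Fin S.m) :
    ρ i * rf.Energy (S.compose hmap i f) (S.compose hmap i f) ≤ rf.Energy f f := by
  rw [(hss f hf).2]
  exact Finset.single_le_sum
    (f := fun j => ρ j * rf.Energy (S.compose hmap j f) (S.compose hmap j f))
    (fun j _ => mul_nonneg (hρ j) (rf.nonneg _ ((hss f hf).1 j))) (Finset.mem_univ i)

lemma IsSelfSimilarForm.R_restrict_le (hss : S.IsSelfSimilarForm hmap rf ρ)
    (hρ : ∀ i, 0 < ρ i) (i : Fin S.m) (p q : ↥S.Vstar) :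
    rf.R ((hmap i).restrict _ _ _ p) ((hmap i).restrict _ _ _ q) ≤ (ρ i)⁻¹ * rf.R p q := by
  refine rf.R_le_of_forall_sq_sub_le (mul_nonneg (inv_nonneg.2 (hρ i).le) (rf.R_nonneg p q))
    fun u hu => ?_
  have hE : rf.Energy (S.compose hmap i u) (S.compose hmap i u) ≤ (ρ i)⁻¹ * rf.Energy u u :=
    (le_inv_mul_iff₀ (hρ i)).2 (hss.mul_energy_compose_le (fun j => (hρ j).le) hu i)
  calc (u ((hmap i).restrict _ _ _ p) - u ((hmap i).restrict _ _ _ q)) ^ 2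
      ≤ rf.R p q * rf.Energy (S.compose hmap i u) (S.compose hmap i u) :=
        rf.sq_sub_le_R_mul_energy ((hss u hu).1 i) p q
    _ ≤ rf.R p q * ((ρ i)⁻¹ * rf.Energy u u) := mul_le_mul_of_nonneg_left hE (rf.R_nonneg p q)
    _ = (ρ i)⁻¹ * rf.R p q * rf.Energy u u := by ring

end SSFR

/-- If a self-similar resistance form on a self-similar finitely ramified fractal `F` is
regular (all energy renormalization factors `ρ_i > 1`), then `Ω = F`: every point of `F` is
the limit of an `R`-Cauchy sequence from `V_*`, i.e. the `R`-completion of `V_*` fills all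
of `F`. -/
theorem stmt19 {F : Type} [MetricSpace F] [CompactSpace F] [ConnectedSpace F]
    (S : SSFR F) (hmap : ∀ i, Set.MapsTo (S.ψ i) S.Vstar S.Vstar)
    (rf : ResistanceForm ↥S.Vstar) (ρ : Fin S.m → ℝ)
    (hss : S.IsSelfSimilarForm hmap rf ρ)
    (hreg : ∀ i, 1 < ρ i) :
    ∀ x : F, ∃ v : ℕ → ↥S.Vstar,
      (∀ ε : ℝ, 0 < ε → ∃ N, ∀ j ≥ N, ∀ l ≥ N, rf.R (v j) (v l) < ε) ∧
      Filter.Tendsto (fun j => (v j : F)) Filter.atTop (nhds x) := by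
  intro x
  obtain ⟨w, y, hy⟩ := S.exists_address x
  obtain ⟨p₀, hp₀⟩ := S.V0_nonempty
  let p : ↥S.Vstar := ⟨p₀, S.V0_subset_Vstar hp₀⟩
  let g (i : Fin S.m) := (hmap i).restrict (S.ψ i) S.Vstar S.Vstar
  refine ⟨fun n => prefixMap g w n p, ?_, ?_⟩
  · obtain ⟨c, hc0, hc1, hρc⟩ := exists_nonneg_lt_one_forall_le (f := fun i => (ρ i)⁻¹)
      fun i => inv_lt_one_of_one_lt₀ (hreg i)
    have hg (i : Fin S.m) (p q : ↥S.Vstar) : rf.R (g i p) (g i q) ≤ c * rf.R p q :=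
      (hss.R_restrict_le (fun j => one_pos.trans (hreg j)) i p q).trans
        (mul_le_mul_of_nonneg_right (hρc i) (rf.R_nonneg p q))
    refine rf.R_cauchy_of_le_geometric (C := ∑ i, rf.R p (g i p)) hc0 hc1 fun n => ?_
    calc rf.R (prefixMap g w n p) (prefixMap g w n (g (w n) p)) ≤ c ^ n * rf.R p (g (w n) p) :=
          prefixMap_le_pow_mul hc0 hg w n p _
      _ ≤ c ^ n * ∑ i, rf.R p (g i p) := mul_le_mul_of_nonneg_left
          (Finset.single_le_sum (f := fun i => rf.R p (g i p)) (fun i _ => rf.R_nonneg _ _)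
            (Finset.mem_univ (w n)))
          (pow_nonneg hc0 n)
      _ = (∑ i, rf.R p (g i p)) * c ^ n := mul_comm _ _
  · convert S.tendsto_prefixMap hy p₀ using 2 with n
    exact coe_prefixMap_restrict hmap w n p
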